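/- Let a ∈ ℝ^p be nonnegative with non-decreasing entries. Then the minimum of Σᵢ₌₁^p aᵢ(‖Bᵢ‖² + ‖Cᵢ‖²)/2 + ‖𝒜(BCᵀ) − b‖² over all B ∈ ℝ^{m×p}, C ∈ ℝ^{n×p} equals the minimum of Σᵢ aᵢσᵢ(X) + ‖𝒜X − b‖² over all X ∈ ℝ^{m×n} with rank(X) ≤ p. -/

import Mathlib

/-!
Both problems share the data-fit term, so only the penalties need comparing.

If `X` has rank at most `p` and singular value decomposition `X = ∑ σᵢ uᵢ wᵢᵀ`, the factors
`Bᵢ = √σᵢ uᵢ`, `Cᵢ = √σᵢ wᵢ` satisfy `BCᵀ = X` and `(‖Bᵢ‖² + ‖Cᵢ‖²)/2 = σᵢ`, so the bilinear problem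
attains every value of the weighted one.

Conversely, fix `B, C` and put `dⱼ = (‖Bⱼ‖² + ‖Cⱼ‖²)/2`. Deleting the first `k` columns of `B`
and `C` changes `BCᵀ` by a matrix of rank at most `k`; Weyl's inequality `σₖ₊ⱼ(X) ≤ σⱼ(X - Z)` and
the nuclear-norm bound `∑ σᵢ(B'C'ᵀ) ≤ ∑ d'ⱼ` (Bessel's inequality for the singular vectors) then
give `∑_{i ≥ k} σᵢ(BCᵀ) ≤ ∑_{j ≥ k} dⱼ` for every `k`. Abel summation against the non-negative,
non-decreasing weights `a` turns these tail inequalities into `∑ aᵢ σᵢ(BCᵀ) ≤ ∑ aᵢ dᵢ`.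
-/

open Matrix BigOperators

/-- Singular values of a real matrix, in non-increasing order: the square roots
of the eigenvalues of XᴴX, sorted descending. -/
noncomputable def sv {m n : ℕ} (X : Matrix (Fin m) (Fin n) ℝ) : Fin n → ℝ :=
  fun i =>
    Real.sqrt ((Matrix.isHermitian_conjTranspose_mul_self X).eigenvalues
      (Tuple.sort
        (fun j => -Real.sqrt ((Matrix.isHermitian_conjTranspose_mul_self X).eigenvalues j)) i))

/-- Singular values padded with zeros, indexed by ℕ. -/
noncomputable def svPad {m n : ℕ} (X : Matrix (Fin m) (Fin n) ℝ) (i : ℕ) : ℝ :=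
  if h : i < n then sv X ⟨i, h⟩ else 0

open Finset Module
open scoped InnerProductSpace RealInnerProductSpace

lemma LinearIndependent.finrank_span_image_finset {R ι M : Type*} [Semiring R]
    [StrongRankCondition R] [Nontrivial R] [AddCommMonoid M] [Module R M] {v : ι → M}
    (hv : LinearIndependent R v) (s : Finset ι) :
    finrank R (Submodule.span R (v '' s)) = s.card := by
  rw [Set.image_eq_range]
  exact (finrank_span_eq_card (hv.comp _ Subtype.val_injective)).trans (Fintype.card_coe s)

lemma Orthonormal.inner_eq_zero_of_mem_span_image {𝕜 ι E : Type*} [RCLike 𝕜]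
    [NormedAddCommGroup E] [InnerProductSpace 𝕜 E] {v : ι → E} (hv : Orthonormal 𝕜 v)
    {s : Set ι} {j : ι} (hj : j ∉ s) {x : E} (hx : x ∈ Submodule.span 𝕜 (v '' s)) :
    ⟪v j, x⟫_𝕜 = 0 := by
  obtain ⟨l, hl, rfl⟩ := (Finsupp.mem_span_image_iff_linearCombination 𝕜).mp hx
  exact inner_eq_zero_symm.mp (hv.inner_finsupp_eq_zero hj hl)

theorem Matrix.rank_eq_finrank_range_toLpLin {l m R : Type*} [Fintype m] [DecidableEq m]
    [Finite l] [CommRing R] (p q : ENNReal) (A : Matrix l m R) :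
    A.rank = finrank R (LinearMap.range (toLpLin p q A)) := by
  rw [toLpLin_eq_toLin]
  exact A.rank_eq_finrank_range_toLin _ _

theorem sum_inner_mul_inner_le {ι κ E F : Type*} [Fintype ι] [Fintype κ]
    [NormedAddCommGroup E] [InnerProductSpace ℝ E] [NormedAddCommGroup F] [InnerProductSpace ℝ F]
    {u : ι → F} {w : ι → E} (hu : Orthonormal ℝ u) (hw : Orthonormal ℝ w)
    (b : κ → F) (c : κ → E) :
    ∑ i, ∑ j, ⟪u i, b j⟫ * ⟪w i, c j⟫ ≤ ∑ j, (‖b j‖ ^ 2 + ‖c j‖ ^ 2) / 2 := by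
  rw [sum_comm]
  refine sum_le_sum fun j _ => ?_
  have hb := hu.sum_inner_products_le (b j) (s := univ)
  have hc := hw.sum_inner_products_le (c j) (s := univ)
  simp only [Real.norm_eq_abs, sq_abs] at hb hc
  calc ∑ i, ⟪u i, b j⟫ * ⟪w i, c j⟫ ≤ ∑ i, (⟪u i, b j⟫ ^ 2 + ⟪w i, c j⟫ ^ 2) / 2 :=
        sum_le_sum fun i _ => by linarith [two_mul_le_add_sq ⟪u i, b j⟫ ⟪w i, c j⟫]
    _ = ((∑ i, ⟪u i, b j⟫ ^ 2) + ∑ i, ⟪w i, c j⟫ ^ 2) / 2 := by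
        rw [← sum_div, sum_add_distrib]
    _ ≤ (‖b j‖ ^ 2 + ‖c j‖ ^ 2) / 2 := by gcongr

/-- Abel summation: `∑ (aᵢ - c) δᵢ = (a₀ - c) T₀ + ∑_{k ≥ 1} (aₖ - aₖ₋₁) Tₖ`, where
`Tₖ = ∑_{i ≥ k} δᵢ`. -/
theorem mul_sum_le_sum_mul_of_sum_Ici_nonneg {p : ℕ} {a δ : Fin p → ℝ} {c : ℝ}
    (ha : Monotone a) (hc : ∀ i, c ≤ a i) (hδ : ∀ k, 0 ≤ ∑ i ≥ k, δ i) :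
    c * ∑ i, δ i ≤ ∑ i, a i * δ i := by
  induction p generalizing c with
  | zero => simp
  | succ p ih =>
    have hsum : 0 ≤ ∑ i, δ i := by simpa using hδ 0
    have htail : a 0 * ∑ i : Fin p, δ i.succ ≤ ∑ i : Fin p, a i.succ * δ i.succ :=
      ih (ha.comp Fin.strictMono_succ.monotone) (fun i => ha (Fin.zero_le _))
        fun k => by simpa [Fin.sum_Ici_succ] using hδ k.succ
    calc c * ∑ i, δ i ≤ a 0 * ∑ i, δ i := mul_le_mul_of_nonneg_right (hc 0) hsum
      _ = a 0 * δ 0 + a 0 * ∑ i : Fin p, δ i.succ := by rw [Fin.sum_univ_succ, mul_add]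
      _ ≤ a 0 * δ 0 + ∑ i : Fin p, a i.succ * δ i.succ := by gcongr
      _ = ∑ i, a i * δ i := (Fin.sum_univ_succ fun i => a i * δ i).symm

lemma sum_range_eq_sum_range_of_eq_zero {M : Type*} [AddCommMonoid M] {f : ℕ → M} {p n : ℕ}
    (hp : ∀ i, p ≤ i → f i = 0) (hn : ∀ i, n ≤ i → f i = 0) :
    ∑ i ∈ range p, f i = ∑ i ∈ range n, f i := by
  rcases le_total p n with h | h
  · exact sum_subset (range_subset_range.mpr h) fun i _ hi => hp i (by simpa using hi)
  · exact (sum_subset (range_subset_range.mpr h) fun i _ hi => hn i (by simpa using hi)).symm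

lemma Fin.sum_Ici_eq_sum_range {M : Type*} [AddCommMonoid M] {p : ℕ} (f : ℕ → M) (k : Fin p) :
    ∑ i ≥ k, f i = ∑ j ∈ range (p - k), f (k + j) := by
  rw [← sum_Ico_eq_sum_range, ← Fin.map_valEmbedding_Ici, sum_map]
  rfl

section SingularBasis

variable {m n : ℕ} (X : Matrix (Fin m) (Fin n) ℝ)

noncomputable def svPerm : Equiv.Perm (Fin n) :=
  Tuple.sort fun j => -√((isHermitian_conjTranspose_mul_self X).eigenvalues j)

noncomputable def rightSingularBasis : OrthonormalBasis (Fin n) ℝ (EuclideanSpace ℝ (Fin n)) :=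
  (isHermitian_conjTranspose_mul_self X).eigenvectorBasis.reindex (svPerm X).symm

lemma sv_nonneg (i : Fin n) : 0 ≤ sv X i := Real.sqrt_nonneg _

lemma sv_antitone : Antitone (sv X) := fun _ _ hij =>
  neg_le_neg_iff.mp <|
    Tuple.monotone_sort (fun j => -√((isHermitian_conjTranspose_mul_self X).eigenvalues j)) hij

lemma svPad_nonneg (i : ℕ) : 0 ≤ svPad X i := by
  unfold svPad
  split_ifs
  exacts [sv_nonneg X _, le_rfl]

lemma svPad_eq_zero_of_le {i : ℕ} (hi : n ≤ i) : svPad X i = 0 :=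
  dif_neg (not_lt.mpr hi)

lemma svPad_val (i : Fin n) : svPad X i = sv X i :=
  dif_pos i.isLt

lemma conjTranspose_mul_self_mulVec_rightSingularBasis (i : Fin n) :
    (Xᴴ * X) *ᵥ ⇑(rightSingularBasis X i) = (sv X i ^ 2) • ⇑(rightSingularBasis X i) := by
  have hsq : sv X i ^ 2 = (isHermitian_conjTranspose_mul_self X).eigenvalues (svPerm X i) :=
    Real.sq_sqrt (eigenvalues_conjTranspose_mul_self_nonneg X _)
  rw [hsq, rightSingularBasis, OrthonormalBasis.reindex_apply, Equiv.symm_symm]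
  exact (isHermitian_conjTranspose_mul_self X).mulVec_eigenvectorBasis _

lemma inner_toLpLin_rightSingularBasis (i j : Fin n) :
    ⟪toLpLin 2 2 X (rightSingularBasis X i), toLpLin 2 2 X (rightSingularBasis X j)⟫ =
      if i = j then sv X i ^ 2 else 0 := by
  have hw := (rightSingularBasis X).orthonormal
  rw [orthonormal_iff_ite] at hw
  calc _ = ⟪rightSingularBasis X i, WithLp.toLp 2 ((Xᴴ * X) *ᵥ ⇑(rightSingularBasis X j))⟫ := by
        simp only [toLpLin_apply, EuclideanSpace.inner_eq_star_dotProduct, star_trivial,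
          ← mulVec_mulVec, conjTranspose_eq_transpose_of_trivial, dotProduct_mulVec,
          mulVec_transpose]
    _ = _ := by
      rw [conjTranspose_mul_self_mulVec_rightSingularBasis, WithLp.toLp_smul, WithLp.toLp_ofLp,
        inner_smul_right, hw]
      split_ifs with h <;> simp [h]

lemma svPad_zero (j : ℕ) : svPad (0 : Matrix (Fin m) (Fin n) ℝ) j = 0 := by
  unfold svPad
  split_ifs with hj
  · have h := inner_toLpLin_rightSingularBasis (0 : Matrix (Fin m) (Fin n) ℝ) ⟨j, hj⟩ ⟨j, hj⟩
    rw [map_zero, LinearMap.zero_apply, inner_zero_left, if_pos rfl] at h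
    exact pow_eq_zero_iff two_ne_zero |>.mp h.symm
  · rfl

lemma norm_toLpLin_sq (v : EuclideanSpace ℝ (Fin n)) :
    ‖toLpLin 2 2 X v‖ ^ 2 = ∑ i, sv X i ^ 2 * ⟪rightSingularBasis X i, v⟫ ^ 2 := by
  conv_lhs => rw [← (rightSingularBasis X).sum_repr' v]
  simp only [map_sum, map_smul, ← real_inner_self_eq_norm_sq, sum_inner, inner_sum,
    real_inner_smul_left, real_inner_smul_right, inner_toLpLin_rightSingularBasis]
  simp [sq, mul_left_comm, mul_comm]

end SingularBasis

section MinMax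

variable {m n : ℕ} (X : Matrix (Fin m) (Fin n) ℝ)

lemma sv_mul_norm_le_norm_toLpLin {i : Fin n} {v : EuclideanSpace ℝ (Fin n)}
    (hv : v ∈ Submodule.span ℝ (rightSingularBasis X '' Set.Iic i)) :
    sv X i * ‖v‖ ≤ ‖toLpLin 2 2 X v‖ := by
  refine (pow_le_pow_iff_left₀ (mul_nonneg (sv_nonneg X i) (norm_nonneg v)) (norm_nonneg _)
    two_ne_zero).mp ?_
  rw [mul_pow, norm_toLpLin_sq, ← (rightSingularBasis X).sum_sq_inner_right, mul_sum]
  refine sum_le_sum fun l _ => ?_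
  by_cases hl : l ≤ i
  · exact mul_le_mul_of_nonneg_right (pow_le_pow_left₀ (sv_nonneg X i) (sv_antitone X hl) 2)
      (sq_nonneg _)
  · simp [(rightSingularBasis X).orthonormal.inner_eq_zero_of_mem_span_image hl hv]

lemma norm_toLpLin_le_sv_mul_norm {i : Fin n} {v : EuclideanSpace ℝ (Fin n)}
    (hv : v ∈ Submodule.span ℝ (rightSingularBasis X '' Set.Ici i)) :
    ‖toLpLin 2 2 X v‖ ≤ sv X i * ‖v‖ := by
  refine (pow_le_pow_iff_left₀ (norm_nonneg _) (mul_nonneg (sv_nonneg X i) (norm_nonneg v))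
    two_ne_zero).mp ?_
  rw [mul_pow, norm_toLpLin_sq, ← (rightSingularBasis X).sum_sq_inner_right, mul_sum]
  refine sum_le_sum fun l _ => ?_
  by_cases hl : i ≤ l
  · exact mul_le_mul_of_nonneg_right (pow_le_pow_left₀ (sv_nonneg X l) (sv_antitone X hl) 2)
      (sq_nonneg _)
  · simp [(rightSingularBasis X).orthonormal.inner_eq_zero_of_mem_span_image hl hv]

/-- Courant–Fischer: `U` meets the span of the right singular vectors `i, …, n - 1`, on which `X`
stretches vectors by at most `σᵢ`. -/
theorem le_sv_of_le_norm_toLpLin (i : Fin n) {c : ℝ} (U : Submodule ℝ (EuclideanSpace ℝ (Fin n)))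
    (hU : (i : ℕ) + 1 ≤ finrank ℝ U) (h : ∀ v ∈ U, c * ‖v‖ ≤ ‖toLpLin 2 2 X v‖) :
    c ≤ sv X i := by
  set E := Submodule.span ℝ (rightSingularBasis X '' Set.Ici i) with hE_def
  have hE : finrank ℝ E = n - i := by
    rw [hE_def, ← Finset.coe_Ici,
      (rightSingularBasis X).orthonormal.linearIndependent.finrank_span_image_finset, Fin.card_Ici]
  have hsup : finrank ℝ ↥(U ⊔ E) ≤ n :=
    (Submodule.finrank_le _).trans_eq finrank_euclideanSpace_fin
  have hdim := Submodule.finrank_sup_add_finrank_inf_eq U E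
  have hUE : U ⊓ E ≠ ⊥ := by
    intro hbot
    rw [hbot, finrank_bot] at hdim
    omega
  obtain ⟨v, ⟨hvU, hvE⟩, hv0⟩ := (Submodule.ne_bot_iff _).mp hUE
  exact le_of_mul_le_mul_right ((h v hvU).trans (norm_toLpLin_le_sv_mul_norm X hvE))
    (norm_pos_iff.mpr hv0)

/-- Weyl's inequality `σₖ₊ⱼ(X) ≤ σⱼ(X - Z)` for `rank Z ≤ k`: the witness subspace for
`le_sv_of_le_norm_toLpLin` is the span of the top `k + j + 1` right singular vectors of `X`,
cut down to the kernel of `Z`. -/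
theorem svPad_add_le_svPad_sub (Z : Matrix (Fin m) (Fin n) ℝ) {k : ℕ} (hZ : Z.rank ≤ k) (j : ℕ) :
    svPad X (k + j) ≤ svPad (X - Z) j := by
  by_cases hkj : k + j < n
  swap
  · rw [svPad_eq_zero_of_le X (not_lt.mp hkj)]
    exact svPad_nonneg _ _
  have hj : j < n := by omega
  rw [svPad, svPad, dif_pos hkj, dif_pos hj]
  set S := Submodule.span ℝ (rightSingularBasis X '' Set.Iic ⟨k + j, hkj⟩) with hS_def
  set K := LinearMap.ker (toLpLin 2 2 Z)
  refine le_sv_of_le_norm_toLpLin (X - Z) ⟨j, hj⟩ (S ⊓ K) ?_ fun v hv => ?_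
  · have hS : finrank ℝ S = k + j + 1 := by
      rw [hS_def, ← Finset.coe_Iic,
        (rightSingularBasis X).orthonormal.linearIndependent.finrank_span_image_finset,
        Fin.card_Iic]
    have hK : Z.rank + finrank ℝ K = n := by
      rw [Z.rank_eq_finrank_range_toLpLin 2 2]
      exact (LinearMap.finrank_range_add_finrank_ker _).trans finrank_euclideanSpace_fin
    have hsup : finrank ℝ ↥(S ⊔ K) ≤ n :=
      (Submodule.finrank_le _).trans_eq finrank_euclideanSpace_fin
    have hSK : finrank ℝ ↥(S ⊔ K) + finrank ℝ ↥(S ⊓ K) = finrank ℝ S + finrank ℝ K :=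
      Submodule.finrank_sup_add_finrank_inf_eq S K
    simp only
    omega
  · rw [map_sub, LinearMap.sub_apply, LinearMap.mem_ker.mp hv.2, sub_zero]
    exact sv_mul_norm_le_norm_toLpLin X hv.1

lemma svPad_eq_zero_of_rank_le {k i : ℕ} (hX : X.rank ≤ k) (hi : k ≤ i) : svPad X i = 0 := by
  refine le_antisymm ?_ (svPad_nonneg X i)
  have h := svPad_add_le_svPad_sub X X hX (i - k)
  rwa [Nat.add_sub_cancel' hi, sub_self, svPad_zero] at h

end MinMax

section LeftSingularVectors

variable {m n : ℕ} (X : Matrix (Fin m) (Fin n) ℝ)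

/-- Vanishes when `sv X i = 0`, since then `(sv X i)⁻¹ = 0`. -/
noncomputable def leftSingularVector (i : Fin n) : EuclideanSpace ℝ (Fin m) :=
  (sv X i)⁻¹ • toLpLin 2 2 X (rightSingularBasis X i)

lemma toLpLin_rightSingularBasis (i : Fin n) :
    toLpLin 2 2 X (rightSingularBasis X i) = sv X i • leftSingularVector X i := by
  by_cases h : sv X i = 0
  · have hnorm := inner_toLpLin_rightSingularBasis X i i
    rw [if_pos rfl, h, real_inner_self_eq_norm_sq] at hnorm
    rw [h, zero_smul, ← norm_eq_zero]
    simpa using hnorm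
  · rw [leftSingularVector, smul_inv_smul₀ h]

lemma inner_leftSingularVector_toLpLin (i : Fin n) :
    ⟪leftSingularVector X i, toLpLin 2 2 X (rightSingularBasis X i)⟫ = sv X i := by
  rw [leftSingularVector, real_inner_smul_left, inner_toLpLin_rightSingularBasis, if_pos rfl, sq,
    ← mul_assoc, inv_mul_mul_self]

lemma orthonormal_leftSingularVector :
    Orthonormal ℝ fun i : {i // sv X i ≠ 0} => leftSingularVector X i := by
  rw [orthonormal_iff_ite]
  rintro ⟨i, hi⟩ ⟨j, hj⟩
  simp only [leftSingularVector, real_inner_smul_left, real_inner_smul_right,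
    inner_toLpLin_rightSingularBasis, Subtype.mk.injEq]
  split_ifs with h
  · subst h
    field_simp
  · simp

lemma toLpLin_eq_sum_sv_smul (v : EuclideanSpace ℝ (Fin n)) :
    toLpLin 2 2 X v =
      ∑ i, (sv X i * ⟪rightSingularBasis X i, v⟫) • leftSingularVector X i := by
  conv_lhs => rw [← (rightSingularBasis X).sum_repr' v]
  simp only [map_sum, map_smul, toLpLin_rightSingularBasis, smul_smul, mul_comm]

lemma apply_eq_sum_sv_mul (x : Fin m) (y : Fin n) :
    X x y = ∑ i, sv X i * leftSingularVector X i x * rightSingularBasis X i y := by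
  have h := congrArg (· x) (toLpLin_eq_sum_sv_smul X (EuclideanSpace.single y 1))
  simpa [toLpLin_apply, EuclideanSpace.inner_single_right, mul_assoc, mul_comm, mul_left_comm]
    using h

lemma sv_mul_norm_leftSingularVector_sq (i : Fin n) :
    sv X i * ‖leftSingularVector X i‖ ^ 2 = sv X i := by
  by_cases h : sv X i = 0
  · simp [h]
  · rw [(orthonormal_leftSingularVector X).1 ⟨i, h⟩, one_pow, mul_one]

noncomputable def balancedLeftFactor (p : ℕ) : Matrix (Fin m) (Fin p) ℝ :=
  of fun x i => if h : (i : ℕ) < n then √(sv X ⟨i, h⟩) * leftSingularVector X ⟨i, h⟩ x else 0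

noncomputable def balancedRightFactor (p : ℕ) : Matrix (Fin n) (Fin p) ℝ :=
  of fun y i => if h : (i : ℕ) < n then √(sv X ⟨i, h⟩) * rightSingularBasis X ⟨i, h⟩ y else 0

lemma sum_balancedLeftFactor_sq {p : ℕ} (i : Fin p) :
    ∑ x, balancedLeftFactor X p x i ^ 2 = svPad X i := by
  unfold svPad
  split_ifs with h
  · simp only [balancedLeftFactor, of_apply, dif_pos h, mul_pow, Real.sq_sqrt (sv_nonneg X _),
      ← mul_sum, ← EuclideanSpace.real_norm_sq_eq, sv_mul_norm_leftSingularVector_sq]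
  · simp [balancedLeftFactor, h]

lemma sum_balancedRightFactor_sq {p : ℕ} (i : Fin p) :
    ∑ y, balancedRightFactor X p y i ^ 2 = svPad X i := by
  unfold svPad
  split_ifs with h
  · simp only [balancedRightFactor, of_apply, dif_pos h, mul_pow, Real.sq_sqrt (sv_nonneg X _),
      ← mul_sum, ← EuclideanSpace.real_norm_sq_eq, (rightSingularBasis X).orthonormal.1, one_pow,
      mul_one]
  · simp [balancedRightFactor, h]

/-- Both sides are `∑ᵢ σᵢ uᵢ wᵢᵀ`: the terms `i ≥ p` vanish because `rank X ≤ p`. -/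
theorem balancedLeftFactor_mul_transpose {p : ℕ} (hX : X.rank ≤ p) :
    balancedLeftFactor X p * (balancedRightFactor X p)ᵀ = X := by
  ext x y
  set g : ℕ → ℝ := fun i => if h : i < n then
    sv X ⟨i, h⟩ * leftSingularVector X ⟨i, h⟩ x * rightSingularBasis X ⟨i, h⟩ y else 0
  have hg : ∀ i, p ≤ i → g i = 0 := fun i hi => by
    have := svPad_eq_zero_of_rank_le X hX hi
    unfold svPad at this
    simp only [g]
    split_ifs with h <;> simp_all
  calc _ = ∑ i : Fin p, g i := by
        rw [mul_apply]
        refine sum_congr rfl fun i _ => ?_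
        simp only [g, balancedLeftFactor, balancedRightFactor, of_apply, transpose_apply]
        split_ifs with h
        · rw [mul_mul_mul_comm, Real.mul_self_sqrt (sv_nonneg X _)]
          ring
        · simp
    _ = ∑ i : Fin n, g i := by
        rw [Fin.sum_univ_eq_sum_range, Fin.sum_univ_eq_sum_range]
        exact sum_range_eq_sum_range_of_eq_zero hg fun i hi => dif_neg (not_lt.mpr hi)
    _ = X x y := by
        rw [apply_eq_sum_sv_mul X x y]
        simp [g]

end LeftSingularVectors

section NuclearNorm

variable {m n : ℕ}

theorem sum_sv_le_of_toLpLin_eq_sum {κ : Type*} [Fintype κ] (X : Matrix (Fin m) (Fin n) ℝ)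
    (b : κ → EuclideanSpace ℝ (Fin m)) (c : κ → EuclideanSpace ℝ (Fin n))
    (hX : ∀ v, toLpLin 2 2 X v = ∑ j, ⟪c j, v⟫ • b j) :
    ∑ i, sv X i ≤ ∑ j, (‖b j‖ ^ 2 + ‖c j‖ ^ 2) / 2 := by
  have hw := (rightSingularBasis X).orthonormal.comp _ (Subtype.val_injective (p := (sv X · ≠ 0)))
  calc ∑ i, sv X i = ∑ i : {i // sv X i ≠ 0}, sv X i :=
        ((sum_filter_ne_zero _).symm.trans (sum_subtype _ (by simp) _))
    _ = ∑ i : {i // sv X i ≠ 0}, ∑ j,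
          ⟪leftSingularVector X i, b j⟫ * ⟪rightSingularBasis X i, c j⟫ := by
        refine sum_congr rfl fun i _ => ?_
        rw [← inner_leftSingularVector_toLpLin, hX, inner_sum]
        simp only [real_inner_smul_right, real_inner_comm (c _), mul_comm]
    _ ≤ _ := sum_inner_mul_inner_le (orthonormal_leftSingularVector X) hw b c

theorem sum_sv_mul_transpose_le {ι : Type*} [Fintype ι] (B : Matrix (Fin m) ι ℝ)
    (C : Matrix (Fin n) ι ℝ) :
    ∑ i, sv (B * Cᵀ) i ≤ ∑ j, ((∑ x, B x j ^ 2) + ∑ y, C y j ^ 2) / 2 := by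
  convert sum_sv_le_of_toLpLin_eq_sum (B * Cᵀ) (fun j => WithLp.toLp 2 (Bᵀ j))
    (fun j => WithLp.toLp 2 (Cᵀ j)) (fun v => ?_) using 3 with j
  · simp [EuclideanSpace.real_norm_sq_eq]
  · ext x
    simp only [toLpLin_apply, mulVec, dotProduct, mul_apply, transpose_apply, mul_comm, mul_sum,
      EuclideanSpace.inner_eq_star_dotProduct, Pi.star_apply, star_trivial, WithLp.ofLp_sum,
      WithLp.ofLp_smul, Finset.sum_apply, Pi.smul_apply, smul_eq_mul]
    rw [sum_comm]
    simp only [mul_assoc]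

end NuclearNorm

section Tails

variable {m n p : ℕ}

lemma sum_range_svPad_le (X : Matrix (Fin m) (Fin n) ℝ) (N : ℕ) :
    ∑ j ∈ range N, svPad X j ≤ ∑ i, sv X i :=
  calc ∑ j ∈ range N, svPad X j ≤ ∑ j ∈ range (n + N), svPad X j :=
        sum_le_sum_of_subset_of_nonneg (range_subset_range.mpr (Nat.le_add_left N n))
          fun j _ _ => svPad_nonneg X j
    _ = ∑ i, sv X i := by
        rw [sum_range_add, ← Fin.sum_univ_eq_sum_range]
        simp [svPad_val, svPad_eq_zero_of_le]

/-- Removing the first `k` columns of `B` and `C` changes `B * Cᵀ` by a matrix of rank at most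
`k`, so by Weyl's inequality the tail `σₖ, σₖ₊₁, …` is dominated by the nuclear norm of what is
left. -/
theorem sum_Ici_svPad_mul_transpose_le (B : Matrix (Fin m) (Fin p) ℝ)
    (C : Matrix (Fin n) (Fin p) ℝ) (k : Fin p) :
    ∑ i ≥ k, svPad (B * Cᵀ) i ≤ ∑ j ≥ k, ((∑ x, B x j ^ 2) + ∑ y, C y j ^ 2) / 2 := by
  set e : Fin p → ℝ := fun j => if k ≤ j then 1 else 0
  set Z := B * diagonal (fun j => if k ≤ j then (0 : ℝ) else 1) * Cᵀ with hZ
  have hZrank : Z.rank ≤ k := by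
    classical
    refine (rank_mul_le_left _ _).trans ((rank_mul_le_right _ _).trans_eq ?_)
    rw [rank_diagonal, Fintype.card_subtype, ← Fin.card_Iio k]
    congr 1
    ext j
    simp
  have hsplit : B * Cᵀ - Z = (B * diagonal e) * (C * diagonal e)ᵀ := by
    ext x y
    rw [hZ, Matrix.sub_apply, mul_apply, mul_apply, mul_apply, ← sum_sub_distrib]
    simp only [e, mul_diagonal, transpose_apply]
    refine sum_congr rfl fun j _ => ?_
    split_ifs <;> ring
  calc ∑ i ≥ k, svPad (B * Cᵀ) i = ∑ j ∈ range (p - k), svPad (B * Cᵀ) (k + j) :=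
        Fin.sum_Ici_eq_sum_range _ k
    _ ≤ ∑ j ∈ range (p - k), svPad (B * Cᵀ - Z) j :=
        sum_le_sum fun j _ => svPad_add_le_svPad_sub _ _ hZrank j
    _ ≤ ∑ i, sv (B * Cᵀ - Z) i := sum_range_svPad_le _ _
    _ ≤ ∑ j, ((∑ x, (B * diagonal e) x j ^ 2) + ∑ y, (C * diagonal e) y j ^ 2) / 2 := by
        rw [hsplit]
        exact sum_sv_mul_transpose_le _ _
    _ = ∑ j ≥ k, ((∑ x, B x j ^ 2) + ∑ y, C y j ^ 2) / 2 := by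
        rw [← filter_le_eq_Ici, sum_filter]
        refine sum_congr rfl fun j _ => ?_
        by_cases hj : k ≤ j <;> simp [e, mul_diagonal, hj]

end Tails

theorem sum_mul_svPad_mul_transpose_le {m n p : ℕ} (a : Fin p → ℝ) (ha0 : ∀ i, 0 ≤ a i)
    (haM : Monotone a) (B : Matrix (Fin m) (Fin p) ℝ) (C : Matrix (Fin n) (Fin p) ℝ) :
    ∑ i, a i * svPad (B * Cᵀ) i ≤ ∑ i, a i * ((∑ j, B j i ^ 2) + ∑ j, C j i ^ 2) / 2 := by
  have h := mul_sum_le_sum_mul_of_sum_Ici_nonneg haM ha0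
    (δ := fun i => ((∑ j, B j i ^ 2) + ∑ j, C j i ^ 2) / 2 - svPad (B * Cᵀ) i) fun k => by
      rw [sum_sub_distrib, sub_nonneg]
      exact sum_Ici_svPad_mul_transpose_le B C k
  simp only [zero_mul, mul_sub, sum_sub_distrib, sub_self] at h
  simp only [mul_div_assoc]
  linarith

/-- For nonnegative non-decreasing weights a, minimizing the bilinear
parameterization Σᵢ aᵢ(‖Bᵢ‖²+‖Cᵢ‖²)/2 + ‖𝒜(BCᵀ) − b‖² is equivalent to
minimizing the weighted nuclear norm problem Σᵢ aᵢσᵢ(X) + ‖𝒜X − b‖² over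
matrices X of rank at most p. -/
theorem bilinear_eq_weighted_nuclear_norm_problem {m n p q : ℕ}
    (a : Fin p → ℝ) (ha0 : ∀ i, 0 ≤ a i) (haM : Monotone a)
    (A : Matrix (Fin m) (Fin n) ℝ →ₗ[ℝ] (Fin q → ℝ)) (b : Fin q → ℝ) :
    sInf {y : ℝ | ∃ (B : Matrix (Fin m) (Fin p) ℝ) (C : Matrix (Fin n) (Fin p) ℝ),
        y = ∑ i, a i * ((∑ j, B j i ^ 2) + ∑ j, C j i ^ 2) / 2 +
          ∑ k, (A (B * Cᵀ) k - b k) ^ 2} =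
    sInf {y : ℝ | ∃ X : Matrix (Fin m) (Fin n) ℝ, X.rank ≤ p ∧
        y = ∑ i : Fin p, a i * svPad X (i : ℕ) +
          ∑ k, (A X k - b k) ^ 2} := by
  refine csInf_eq_csInf_of_forall_exists_le ?_ ?_
  · rintro _ ⟨B, C, rfl⟩
    have hrank : (B * Cᵀ).rank ≤ p :=
      (rank_mul_le_left B Cᵀ).trans ((rank_le_card_width B).trans_eq (Fintype.card_fin p))
    exact ⟨_, ⟨B * Cᵀ, hrank, rfl⟩,
      add_le_add_left (sum_mul_svPad_mul_transpose_le a ha0 haM B C) _⟩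
  · rintro _ ⟨X, hX, rfl⟩
    refine ⟨_, ⟨balancedLeftFactor X p, balancedRightFactor X p, rfl⟩, le_of_eq ?_⟩
    rw [balancedLeftFactor_mul_transpose X hX]
    congr 1
    refine sum_congr rfl fun i _ => ?_
    rw [sum_balancedLeftFactor_sq, sum_balancedRightFactor_sq]
    ring
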